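/- Fix k > 0 and let g(z) = 1/(1 + z²). For ε > 0 define u_ε : ℝ² → ℝ by u_ε(x,y) = x + ε cos(ky), and let R_ε(x,y) = [ |∇u_ε| div( g(|∇u_ε|) ∇u_ε/|∇u_ε| ) ](x,y) be the self-snakes right-hand side. Then, as ε → 0⁺, sup over (x,y) ∈ ℝ² of | R_ε(x,y) + (k² ε/2) cos(ky) | = O(ε²); moreover the curvature term satisfies sup over (x,y) of | div( ∇u_ε/|∇u_ε| )(x,y) + k² ε cos(ky) | = O(ε²). (A level-line-aligned oscillation of frequency k on a unit slope is dampened by the self-snakes evolution with frequency response factor −k²/2, and pre-smoothing does not change this first-order response.) -/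

import Mathlib

/-! For `u(x, y) = x + f(y)` the gradient `(1, f'(y))` depends on `y` alone, so the divergence
of any field `ψ(|∇u|) ∇u` is the `y`-derivative of its second component `ψ(√(1 + f'²)) f'`.
The chain rule gives `div(∇u/|∇u|) = f'' (1 + f'²)^(-3/2)` and
`|∇u| div(g(|∇u|) ∇u/|∇u|) = f'' (2 - f'² - 2f'⁴) / ((2 + f'²)² (1 + f'²))`; these factors are
`1` and `1/2` at slope `0` up to `O(f'²)`. For `f(y) = ε cos(ky)` one has `f' = O(ε)` and
`f'' = -k²ε cos(ky)`, so both errors are `O(ε³)`. -/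

open MeasureTheory Filter Topology

noncomputable section

abbrev Plane := EuclideanSpace ℝ (Fin 2)

/-- divergence of a planar vector field -/
def div2 (V : Plane → Plane) (x : Plane) : ℝ :=
  ∑ i : Fin 2, fderiv ℝ (fun y => V y i) x (EuclideanSpace.single i 1)

/-- the Perona–Malik edge-stopping function (β = 1) -/
def g (z : ℝ) : ℝ := 1 / (1 + z ^ 2)

/-- the level-line-aligned perturbed slope u_ε(x,y) = x + ε cos(ky) -/
def uPertY (k ε : ℝ) (p : Plane) : ℝ := p 0 + ε * Real.cos (k * p 1)

/-- the self-snakes right-hand side |∇u| div( g(|∇u|) ∇u/|∇u| ) -/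
def selfSnakesRHS (u : Plane → ℝ) (p : Plane) : ℝ :=
  ‖gradient u p‖ *
    div2 (fun y => (g ‖gradient u y‖ / ‖gradient u y‖) • gradient u y) p

/-- the curvature term div( ∇u/|∇u| ) -/
def curvTerm (u : Plane → ℝ) (p : Plane) : ℝ :=
  div2 (fun y => ‖gradient u y‖⁻¹ • gradient u y) p

theorem fderiv_apply_eq_zero_of_forall_add_smul_eq {E F : Type*} [NormedAddCommGroup E]
    [NormedSpace ℝ E] [NormedAddCommGroup F] [NormedSpace ℝ F] {f : E → F} {x v : E}
    (h : ∀ t : ℝ, f (x + t • v) = f x) : fderiv ℝ f x v = 0 := by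
  by_cases hf : DifferentiableAt ℝ f x
  · simp [← hf.lineDeriv_eq_fderiv, lineDeriv, h]
  · simp [fderiv_zero_of_not_differentiableAt hf]

theorem hasFDerivAt_comp_apply_one {φ : ℝ → ℝ} {d : ℝ} {p : Plane} (h : HasDerivAt φ d (p 1)) :
    HasFDerivAt (fun q : Plane => φ (q 1)) (d • (EuclideanSpace.proj 1 : Plane →L[ℝ] ℝ)) p :=
  h.comp_hasFDerivAt p (EuclideanSpace.proj 1 : Plane →L[ℝ] ℝ).hasFDerivAt

theorem div2_comp_snd (W : ℝ → Plane) (p : Plane) {d : ℝ}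
    (h : HasDerivAt (fun z => W z 1) d (p 1)) :
    div2 (fun q => W (q 1)) p = d := by
  rw [div2, Fin.sum_univ_two, (hasFDerivAt_comp_apply_one h).fderiv,
    fderiv_apply_eq_zero_of_forall_add_smul_eq]
  · simp
  · intro t; simp

def slopeGraph (f : ℝ → ℝ) (q : Plane) : ℝ := q 0 + f (q 1)

theorem hasGradientAt_slopeGraph {f : ℝ → ℝ} {a : ℝ} {p : Plane} (hf : HasDerivAt f a (p 1)) :
    HasGradientAt (slopeGraph f) !₂[1, a] p := by
  rw [hasGradientAt_iff_hasFDerivAt]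
  refine ((EuclideanSpace.proj 0 : Plane →L[ℝ] ℝ).hasFDerivAt.add
    (hasFDerivAt_comp_apply_one hf)).congr_fderiv ?_
  ext q
  simp [InnerProductSpace.toDual_apply_apply, PiLp.inner_apply, Fin.sum_univ_two, mul_comm]

theorem norm_one_slope (a : ℝ) : ‖!₂[1, a]‖ = √(1 + a ^ 2) := by
  simp [EuclideanSpace.norm_eq]

theorem gradient_slopeGraph {f f' : ℝ → ℝ} (hf : ∀ z, HasDerivAt f (f' z) z) :
    gradient (slopeGraph f) = fun q => !₂[1, f' (q 1)] :=
  funext fun q => (hasGradientAt_slopeGraph (hf (q 1))).gradient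

theorem div2_smul_gradient_slopeGraph (ψ : ℝ → ℝ) {f f' : ℝ → ℝ}
    (hf : ∀ z, HasDerivAt f (f' z) z) (p : Plane) {d : ℝ}
    (h : HasDerivAt (fun z => ψ √(1 + f' z ^ 2) * f' z) d (p 1)) :
    div2 (fun q => ψ ‖gradient (slopeGraph f) q‖ • gradient (slopeGraph f) q) p = d := by
  simp only [gradient_slopeGraph hf, norm_one_slope]
  exact div2_comp_snd (fun z => ψ √(1 + f' z ^ 2) • !₂[1, f' z]) p (by simpa using h)

theorem hasDerivAt_inv_sqrt_one_add_sq (a : ℝ) :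
    HasDerivAt (fun b => (√(1 + b ^ 2))⁻¹) (-a * (√(1 + a ^ 2))⁻¹ ^ 3) a := by
  have hpos : 0 < 1 + a ^ 2 := by positivity
  refine ((((hasDerivAt_pow 2 a).const_add 1).sqrt hpos.ne').inv
    (Real.sqrt_pos.2 hpos).ne').congr_deriv ?_
  field_simp
  simp

theorem g_sqrt_one_add_sq (a : ℝ) : g √(1 + a ^ 2) = (2 + a ^ 2)⁻¹ := by
  rw [g, Real.sq_sqrt (by positivity)]; ring

theorem hasDerivAt_curvature_flux (a : ℝ) :
    HasDerivAt (fun b => (√(1 + b ^ 2))⁻¹ * b) ((√(1 + a ^ 2))⁻¹ ^ 3) a := by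
  have hs := Real.sq_sqrt (by positivity : (0:ℝ) ≤ 1 + a ^ 2)
  have hs0 : √(1 + a ^ 2) ≠ 0 := by positivity
  refine ((hasDerivAt_inv_sqrt_one_add_sq a).mul (hasDerivAt_id a)).congr_deriv ?_
  simp only [id]
  field_simp
  linear_combination hs

theorem hasDerivAt_selfSnakes_flux (a : ℝ) :
    HasDerivAt (fun b => g √(1 + b ^ 2) / √(1 + b ^ 2) * b)
      ((2 - a ^ 2 - 2 * a ^ 4) / (2 + a ^ 2) ^ 2 * (√(1 + a ^ 2))⁻¹ ^ 3) a := by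
  have hs := Real.sq_sqrt (by positivity : (0:ℝ) ≤ 1 + a ^ 2)
  have hs0 : √(1 + a ^ 2) ≠ 0 := by positivity
  have h2 : (2 + a ^ 2) ≠ 0 := by positivity
  simp only [g_sqrt_one_add_sq, div_eq_mul_inv]
  refine ((((hasDerivAt_pow 2 a).const_add 2).inv h2).mul
    (hasDerivAt_inv_sqrt_one_add_sq a) |>.mul (hasDerivAt_id a)).congr_deriv ?_
  simp only [id, Pi.mul_apply, Pi.inv_apply]
  field_simp
  linear_combination (2 - a ^ 2) * hs

section SlopeGraph

variable {f f' : ℝ → ℝ} {f'' : ℝ} {p : Plane}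

theorem curvTerm_slopeGraph (hf : ∀ z, HasDerivAt f (f' z) z) (hf' : HasDerivAt f' f'' (p 1)) :
    curvTerm (slopeGraph f) p = (√(1 + f' (p 1) ^ 2))⁻¹ ^ 3 * f'' :=
  div2_smul_gradient_slopeGraph (·⁻¹) hf p ((hasDerivAt_curvature_flux _).comp _ hf')

theorem selfSnakesRHS_slopeGraph (hf : ∀ z, HasDerivAt f (f' z) z)
    (hf' : HasDerivAt f' f'' (p 1)) :
    selfSnakesRHS (slopeGraph f) p =
      (2 - f' (p 1) ^ 2 - 2 * f' (p 1) ^ 4) / ((2 + f' (p 1) ^ 2) ^ 2 * (1 + f' (p 1) ^ 2)) *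
        f'' := by
  rw [selfSnakesRHS, div2_smul_gradient_slopeGraph (fun r => g r / r) hf p
    ((hasDerivAt_selfSnakes_flux _).comp _ hf'), gradient_slopeGraph hf, norm_one_slope]
  set a := f' (p 1)
  have hs := Real.sq_sqrt (by positivity : (0:ℝ) ≤ 1 + a ^ 2)
  have hs0 : √(1 + a ^ 2) ≠ 0 := by positivity
  field_simp
  rw [hs]

end SlopeGraph

theorem abs_inv_sqrt_one_add_sq_pow_three_sub_one_le (a : ℝ) :
    |(√(1 + a ^ 2))⁻¹ ^ 3 - 1| ≤ 3 / 2 * a ^ 2 := by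
  have hs := Real.sq_sqrt (by positivity : (0:ℝ) ≤ 1 + a ^ 2)
  have hs1 : 1 ≤ √(1 + a ^ 2) := Real.one_le_sqrt.2 (by nlinarith)
  set s := √(1 + a ^ 2)
  have hs3 : 0 < s ^ 3 := by positivity
  have hsub : 1 - (s ^ 3)⁻¹ = (s ^ 3 - 1) / s ^ 3 := by field_simp
  rw [inv_pow, abs_sub_comm, hsub, abs_of_nonneg (div_nonneg (by nlinarith) hs3.le),
    div_le_iff₀ hs3]
  have hs1' := sub_nonneg.2 hs1
  nlinarith [mul_nonneg hs1' hs1', mul_nonneg (mul_nonneg hs1' hs1') hs1',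
    mul_nonneg (mul_nonneg hs1' hs1') (mul_nonneg hs1' hs1')]

theorem abs_selfSnakes_factor_sub_half_le (a : ℝ) :
    |(2 - a ^ 2 - 2 * a ^ 4) / ((2 + a ^ 2) ^ 2 * (1 + a ^ 2)) - 1 / 2| ≤ 5 / 4 * a ^ 2 := by
  have key : (2 - a ^ 2 - 2 * a ^ 4) / ((2 + a ^ 2) ^ 2 * (1 + a ^ 2)) - 1 / 2 =
      -(a ^ 2 * (10 + 9 * a ^ 2 + a ^ 4) / (2 * (2 + a ^ 2) ^ 2 * (1 + a ^ 2))) := by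
    field_simp; ring
  rw [key, abs_neg, abs_of_nonneg (by positivity), div_le_iff₀ (by positivity)]
  nlinarith [sq_nonneg a, pow_nonneg (sq_nonneg a) 2, pow_nonneg (sq_nonneg a) 3]

section Oscillation

variable (k ε : ℝ)

theorem uPertY_eq_slopeGraph : uPertY k ε = slopeGraph (fun z => ε * Real.cos (k * z)) := rfl

theorem hasDerivAt_mul_cos_mul (z : ℝ) :
    HasDerivAt (fun z => ε * Real.cos (k * z)) (-(ε * k * Real.sin (k * z))) z := by
  refine (((hasDerivAt_id z).const_mul k).cos.const_mul ε).congr_deriv ?_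
  simp only [id]; ring

theorem hasDerivAt_neg_mul_sin_mul (z : ℝ) :
    HasDerivAt (fun z => -(ε * k * Real.sin (k * z))) (-(ε * k ^ 2 * Real.cos (k * z))) z := by
  refine (((hasDerivAt_id z).const_mul k).sin.const_mul (ε * k)).neg.congr_deriv ?_
  simp only [id]; ring

theorem abs_sub_mul_cos_le {c m B : ℝ} (hB : 0 ≤ B) (hε : 0 ≤ ε) (hε1 : ε ≤ 1) (y : ℝ)
    (hc : |c - m| ≤ B * (-(ε * k * Real.sin (k * y))) ^ 2) :
    |(c - m) * -(ε * k ^ 2 * Real.cos (k * y))| ≤ B * k ^ 4 * ε ^ 2 := by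
  have hsin : (-(ε * k * Real.sin (k * y))) ^ 2 ≤ (ε * k) ^ 2 := by
    rw [neg_sq, mul_pow]
    exact mul_le_of_le_one_right (sq_nonneg _) (Real.sin_sq_le_one _)
  have hcos : |-(ε * k ^ 2 * Real.cos (k * y))| ≤ ε * k ^ 2 := by
    rw [abs_neg, abs_mul, abs_of_nonneg (by positivity)]
    exact mul_le_of_le_one_right (by positivity) (Real.abs_cos_le_one _)
  calc |(c - m) * -(ε * k ^ 2 * Real.cos (k * y))|
      ≤ (B * (ε * k) ^ 2) * (ε * k ^ 2) := by
        rw [abs_mul]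
        exact mul_le_mul (hc.trans (by gcongr)) hcos (abs_nonneg _) (by positivity)
    _ = B * k ^ 4 * ε ^ 2 * ε := by ring
    _ ≤ B * k ^ 4 * ε ^ 2 := mul_le_of_le_one_right (by positivity) hε1

end Oscillation

theorem self_snakes_levelline_aligned_frequency_response_general (k : ℝ) :
    (∃ C : ℝ, ∀ᶠ ε in 𝓝[>] (0:ℝ), ∀ p : Plane,
      |selfSnakesRHS (uPertY k ε) p + k ^ 2 * ε / 2 * Real.cos (k * p 1)|
        ≤ C * ε ^ 2) ∧
    (∃ C : ℝ, ∀ᶠ ε in 𝓝[>] (0:ℝ), ∀ p : Plane,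
      |curvTerm (uPertY k ε) p + k ^ 2 * ε * Real.cos (k * p 1)|
        ≤ C * ε ^ 2) := by
  refine ⟨⟨5 / 4 * k ^ 4, ?_⟩, ⟨3 / 2 * k ^ 4, ?_⟩⟩ <;>
    filter_upwards [Ioo_mem_nhdsGT one_pos] with ε ⟨hε, hε1⟩ p
  · rw [uPertY_eq_slopeGraph, selfSnakesRHS_slopeGraph (hasDerivAt_mul_cos_mul k ε)
      (hasDerivAt_neg_mul_sin_mul k ε _)]
    convert abs_sub_mul_cos_le k ε (by positivity) hε.le hε1.le (p 1)
      (abs_selfSnakes_factor_sub_half_le _) using 2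
    ring
  · rw [uPertY_eq_slopeGraph, curvTerm_slopeGraph (hasDerivAt_mul_cos_mul k ε)
      (hasDerivAt_neg_mul_sin_mul k ε _)]
    convert abs_sub_mul_cos_le k ε (by positivity) hε.le hε1.le (p 1)
      (abs_inv_sqrt_one_add_sq_pow_three_sub_one_le _) using 2
    ring

/-- A level-line-aligned oscillation of frequency k on a unit slope is dampened
by the self-snakes evolution with frequency response factor −k²/2, uniformly up
to O(ε²); the curvature term itself is −k²ε cos(ky) up to a uniform O(ε²). -/
theorem self_snakes_levelline_aligned_frequency_response (k : ℝ) (hk : 0 < k) :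
    (∃ C : ℝ, ∀ᶠ ε in 𝓝[>] (0:ℝ), ∀ p : Plane,
      |selfSnakesRHS (uPertY k ε) p + k ^ 2 * ε / 2 * Real.cos (k * p 1)|
        ≤ C * ε ^ 2) ∧
    (∃ C : ℝ, ∀ᶠ ε in 𝓝[>] (0:ℝ), ∀ p : Plane,
      |curvTerm (uPertY k ε) p + k ^ 2 * ε * Real.cos (k * p 1)|
        ≤ C * ε ^ 2) :=
  self_snakes_levelline_aligned_frequency_response_general k
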